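/- (Property of structural rules, left) If Γ ⊢ {P} ⇝ {Q} | α is derivable by the rules of the PCP logic, where α is a single ground action, then there exist an axiom φ(x̄); {P'(x̄)} ⇝ {Q'(x̄)} | α(x̄) in Γ and a ground substitution σ such that α(x̄)[σ] = α and P <: P'(x̄)[σ]. -/

import Mathlib

/-- A polarity is `+` or `-`. -/
inductive Polarity : Type
  | pos
  | neg
deriving DecidableEq

/-- Negation of polarities: −+ = − and −− = +. -/
def Polarity.negP : Polarity → Polarity
  | pos => neg
  | neg => pos

/-- A term is a variable or a constant. -/
inductive Term (V C : Type) : Type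
  | var (v : V)
  | const (c : C)

/-- Applying a ground substitution `σ : V → C` to a term yields a constant. -/
def Term.subst {V C : Type} (σ : V → C) : Term V C → C
  | var v => σ v
  | const c => c

/-- A constraint is `t = t'` (`isEq = true`) or `t ≠ t'` (`isEq = false`). -/
structure Constraint (V C : Type) : Type where
  lhs : Term V C
  rhs : Term V C
  isEq : Bool

/-- A ground instance of a constraint holds iff the equality holds syntactically
(resp. the two sides are syntactically distinct for an inequality). -/
def Constraint.holds {V C : Type} (σ : V → C) (c : Constraint V C) : Prop :=
  if c.isEq then c.lhs.subst σ = c.rhs.subst σ else c.lhs.subst σ ≠ c.rhs.subst σ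

/-- A (possibly non-ground) atom: a predicate applied to a list of terms. -/
abbrev AtomT (Pr V C : Type) : Type := Pr × List (Term V C)

/-- A ground atom: a predicate applied to a list of constants. -/
abbrev GAtom (Pr C : Type) : Type := Pr × List C

/-- A state over (possibly non-ground) atoms: a finite list of formula maps `A ↦ z`. -/
abbrev PStateT (Pr V C : Type) : Type := List (AtomT Pr V C × Polarity)

/-- A ground state: a finite list of formula maps over ground atoms;
`emp` is `[]` and `(A ↦ z) * S` is `(A, z) :: S`. -/
abbrev GState (Pr C : Type) : Type := List (GAtom Pr C × Polarity)

/-- Applying a ground substitution to an atom. -/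
def substAtom {Pr V C : Type} (σ : V → C) (a : AtomT Pr V C) : GAtom Pr C :=
  (a.1, a.2.map (Term.subst σ))

/-- Applying a ground substitution to a state. -/
def substState {Pr V C : Type} (σ : V → C) (S : PStateT Pr V C) : GState Pr C :=
  S.map (fun p => (substAtom σ p.1, p.2))

/-- The subtyping relation `<:` on states:
(NilSub) `S <: emp`; (ASub) `S' <: (A ↦ z) * S` whenever `S' <: S` and `(A ↦ z) ∈ S'`. -/
inductive StSub {A : Type} : List (A × Polarity) → List (A × Polarity) → Prop
  | nil (S : List (A × Polarity)) : StSub S []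
  | cons {S' S : List (A × Polarity)} {a : A} {z : Polarity} :
      StSub S' S → (a, z) ∈ S' → StSub S' ((a, z) :: S)

/-- `A ∈ S` iff `(A ↦ +) ∈ S` or `(A ↦ −) ∈ S`. -/
def atomMem {A : Type} (a : A) (S : List (A × Polarity)) : Prop :=
  (a, Polarity.pos) ∈ S ∨ (a, Polarity.neg) ∈ S

/-- The override operator `⊔`: `P ⊔ emp = P`, and
`P ⊔ ((A ↦ z) * Q) = ((A ↦ z) * (P with every formula map for the atom A removed)) ⊔ Q`. -/
def override {A : Type} [DecidableEq A] :
    List (A × Polarity) → List (A × Polarity) → List (A × Polarity)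
  | P, [] => P
  | P, (a, z) :: Q => override ((a, z) :: P.filter (fun p => p.1 ≠ a)) Q

/-- An axiom of a planning context:
`φ(x̄); {P(x̄)} ⇝ {Q(x̄)} | α(x̄)`, where `α(x̄)` is an action name applied to
the variables `x̄`. -/
structure Ax (V C Pr ActName : Type) : Type where
  constraints : List (Constraint V C)
  pre : PStateT Pr V C
  post : PStateT Pr V C
  name : ActName
  vars : List V

/-- A ground action: an action name applied to a list of constants. -/
abbrev GAct (ActName C : Type) : Type := ActName × List C

/-- A plan is `shrink`, a ground action, or a composition `f ; f1`. -/
inductive Plan (ActName C : Type) : Type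
  | shrink
  | act (a : GAct ActName C)
  | seq (f f1 : Plan ActName C)

/-- The judgement `Γ ⊢ {P} ⇝ {Q} | f` of the PCP logic. -/
inductive Derives {V C Pr ActName : Type} (Γ : List (Ax V C Pr ActName)) :
    GState Pr C → GState Pr C → Plan ActName C → Prop
  | applyAction {ax : Ax V C Pr ActName} {σ : V → C} :
      ax ∈ Γ → (∀ c ∈ ax.constraints, c.holds σ) →
      Derives Γ (substState σ ax.pre) (substState σ ax.post)
        (Plan.act (ax.name, ax.vars.map σ))
  | composition {P Q Q' R : GState Pr C} {f f1 : Plan ActName C} :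
      StSub Q Q' → Derives Γ P Q f → Derives Γ Q' R f1 →
      Derives Γ P R (Plan.seq f f1)
  | frame {P Q : GState Pr C} {a : GAct ActName C} {A : GAtom Pr C} {z : Polarity} :
      Derives Γ P Q (Plan.act a) → ¬ atomMem A P → ¬ atomMem A Q →
      Derives Γ (P ++ [(A, z)]) (Q ++ [(A, z)]) (Plan.act a)
  | weakening {P P' Q : GState Pr C} {f : Plan ActName C} :
      StSub P' P → Derives Γ P Q f → Derives Γ P' Q f
  | shrink {P Q Q' : GState Pr C} {f : Plan ActName C} :
      StSub Q Q' → Derives Γ P Q f → Derives Γ P Q' (Plan.seq f Plan.shrink)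

/-- `w ∈ ⟨w_S⟩`: `w` is a well-formed world for the state `S`. -/
def WfWorld {A : Type} (w : Set A) (S : List (A × Polarity)) : Prop :=
  ∀ a : A, ((a, Polarity.pos) ∈ S → a ∈ w) ∧ ((a, Polarity.neg) ∈ S → a ∉ w)

/-- Evaluation of a plan in a world, using an action handler `δ`. -/
def evalPlan {ActName C W : Type} (δ : GAct ActName C → W → W) :
    Plan ActName C → W → W
  | Plan.shrink, w => w
  | Plan.act a, w => δ a w
  | Plan.seq f f1, w => evalPlan δ f1 (evalPlan δ f w)

/-- An action handler `δ` is well-formed for `Γ` if, whenever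
`φ(x̄); {P'(x̄)} ⇝ {Q(x̄)} | α(x̄) ∈ Γ`, `σ` is a ground substitution with `φ(x̄)[σ]`
normalising to `⊤`, `P` is a ground state with `P <: P'(x̄)[σ]`, and `w ∈ ⟨w_P⟩`,
then `δ (α(x̄)[σ]) w ∈ ⟨w_{P ⊔ Q(x̄)[σ]}⟩`. -/
def WellFormedHandler {V C Pr ActName : Type} [DecidableEq Pr] [DecidableEq C]
    (Γ : List (Ax V C Pr ActName))
    (δ : GAct ActName C → Set (GAtom Pr C) → Set (GAtom Pr C)) : Prop :=
  ∀ ax ∈ Γ, ∀ σ : V → C, (∀ c ∈ ax.constraints, c.holds σ) →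
    ∀ P : GState Pr C, StSub P (substState σ ax.pre) →
    ∀ w : Set (GAtom Pr C), WfWorld w P →
      WfWorld (δ (ax.name, ax.vars.map σ) w) (override P (substState σ ax.post))

namespace StSub

variable {A : Type} {S S' S'' : List (A × Polarity)}

theorem iff_subset : StSub S' S ↔ S ⊆ S' := by
  constructor
  · intro h
    induction h with
    | nil => exact List.nil_subset _
    | cons _ hmem ih => exact List.cons_subset.mpr ⟨hmem, ih⟩
  · intro h
    induction S with
    | nil => exact StSub.nil _
    | cons p S ih => exact StSub.cons (ih (List.cons_subset.mp h).2) (List.cons_subset.mp h).1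

theorem refl (S : List (A × Polarity)) : StSub S S :=
  iff_subset.mpr (List.Subset.refl S)

theorem trans (h₁ : StSub S'' S') (h₂ : StSub S' S) : StSub S'' S :=
  iff_subset.mpr (List.Subset.trans (iff_subset.mp h₂) (iff_subset.mp h₁))

theorem append_right (h : StSub S' S) (T : List (A × Polarity)) : StSub (S' ++ T) S :=
  iff_subset.mpr (List.Subset.trans (iff_subset.mp h) (List.subset_append_left S' T))

end StSub

/- Only ApplyAction, Frame and Weakening can conclude a single action; Frame and Weakening only
enlarge the precondition, and `<:` is inclusion, so the precondition keeps containing the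
instantiated axiom's. -/
theorem structural_rules_left_general {V C Pr ActName : Type}
    (Γ : List (Ax V C Pr ActName))
    (P Q : GState Pr C) (a : GAct ActName C)
    (h : Derives Γ P Q (Plan.act a)) :
    ∃ ax ∈ Γ, ∃ σ : V → C,
      (ax.name, ax.vars.map σ) = a ∧ StSub P (substState σ ax.pre) := by
  generalize hf : Plan.act a = f at h
  induction h with
  | @applyAction ax σ hax _ => exact ⟨ax, hax, σ, (Plan.act.inj hf).symm, StSub.refl _⟩
  | composition => cases hf
  | shrink => cases hf
  | frame _ _ _ ih =>
    obtain ⟨ax, hax, σ, hname, hpre⟩ := ih hf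
    exact ⟨ax, hax, σ, hname, hpre.append_right _⟩
  | weakening hsub _ ih =>
    obtain ⟨ax, hax, σ, hname, hpre⟩ := ih hf
    exact ⟨ax, hax, σ, hname, hsub.trans hpre⟩

theorem structural_rules_left {V C Pr ActName : Type} [DecidableEq Pr] [DecidableEq C]
    (Γ : List (Ax V C Pr ActName))
    (hUnique : ∀ ax1 ∈ Γ, ∀ ax2 ∈ Γ, ax1.name = ax2.name → ax1 = ax2)
    (P Q : GState Pr C) (a : GAct ActName C)
    (h : Derives Γ P Q (Plan.act a)) :
    ∃ ax ∈ Γ, ∃ σ : V → C,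
      (ax.name, ax.vars.map σ) = a ∧ StSub P (substState σ ax.pre) :=
  structural_rules_left_general Γ P Q a h
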